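/- arXiv:1905.07087 — 2 statements merged into one kernel-verified Lean document; each statement's English description precedes it below -/
import Mathlib

section
/- For variables $z_1,\dots,z_n$ and a parameter $t$, the symmetrization $\mathrm{Sym}\left[\prod_{1\le i<j\le n}\frac{z_i-z_j}{z_i-tz_j}\right] = \frac{1}{n!}\sum_{\sigma\in\mathfrak{S}_n}\prod_{1\le i<j\le n}\frac{z_{\sigma(i)}-z_{\sigma(j)}}{z_{\sigma(i)}-tz_{\sigma(j)}}$ equals $\frac{[n]_t!}{n!}\prod_{1\le i<j\le n}\frac{(z_i-z_j)(z_j-z_i)}{(z_i-tz_j)(z_j-tz_i)}$, where $[n]_t! = \prod_{k=1}^n \frac{1-t^k}{1-t}$. -/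
/-!
Put `g a b = (a - b) / (a - t * b)` and `F a b = (t * a - b) / (a - b)`. Since `g b a * F a b = 1`
for `a ≠ b`, the summand of `σ` is the product of `g (z i) (z j)` over all ordered pairs `i ≠ j`,
which does not depend on `σ`, times `∏_{i<j} F (z (σ i)) (z (σ j))`. The sum of the latter over
`σ` is `[n]_t!`: sorting permutations by `σ 0 = p` reduces it to `n - 1` variables times
`∑_p ∏_{q ≠ p} F (x p) (x q)`, and `(t - 1)` times this sum is, by Lagrange interpolation at the
nodes `x q`, the top coefficient `t ^ n - 1` of `(∏_q (t X - x q) - ∏_q (X - x q)) / X`.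
-/

open Finset Polynomial

namespace Polynomial

variable {R : Type*} [CommRing R]

theorem divX_X_mul (p : R[X]) : (X * p).divX = p := by
  ext n
  simp [coeff_X_mul]

theorem eval_divX_mul_sub_mul_sub (a t : R) {A B : R[X]} (h : A.eval 0 = B.eval 0) :
    ((C t * X - C a) * A - (X - C a) * B).divX.eval a = (t - 1) * A.eval a := by
  obtain ⟨E, hE⟩ : X ∣ A - B := X_dvd_iff.mpr (by simp [coeff_zero_eq_eval_zero, h])
  have : (C t * X - C a) * A - (X - C a) * B = X * (C (t - 1) * A + (X - C a) * E) := by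
    rw [map_sub, map_one]
    linear_combination (X - C a) * hE
  simp [this, divX_X_mul]

variable {ι : Type*} (s : Finset ι) (x : ι → R) (t : R)

theorem natDegree_prod_C_mul_X_sub_C_le :
    (∏ q ∈ s, (C t * X - C (x q))).natDegree ≤ #s := by
  refine (natDegree_prod_le s _).trans ?_
  simp only [natDegree_sub_C, sum_const, smul_eq_mul]
  exact mul_le_of_le_one_right' ((natDegree_C_mul_le t X).trans natDegree_X_le)

theorem coeff_card_prod_C_mul_X_sub_C :
    (∏ q ∈ s, (C t * X - C (x q))).coeff #s = t ^ #s := by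
  have := coeff_prod_of_natDegree_le (s := s) (fun q => C t * X - C (x q)) 1
    (fun _ _ => by compute_degree)
  simpa using this

end Polynomial

theorem sub_one_mul_sum_prod_erase_div {K ι : Type*} [Field K] [DecidableEq ι] {s : Finset ι}
    {x : ι → K} (hx : Set.InjOn x s) (t : K) :
    (t - 1) * ∑ p ∈ s, ∏ q ∈ s.erase p, (t * x p - x q) / (x p - x q) = t ^ #s - 1 := by
  rcases s.eq_empty_or_nonempty with rfl | hs
  · simp
  set D : K[X] := ∏ q ∈ s, (C t * X - C (x q)) - ∏ q ∈ s, (X - C (x q)) with hD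
  have hB_natDegree := natDegree_prod_C_mul_X_sub_C_le s x 1
  have hB_coeff := coeff_card_prod_C_mul_X_sub_C s x 1
  simp only [map_one, one_mul, one_pow] at hB_natDegree hB_coeff
  have hD_natDegree : D.natDegree ≤ #s :=
    (natDegree_sub_le_of_le (natDegree_prod_C_mul_X_sub_C_le s x t) hB_natDegree).trans
      (max_self _).le
  have hD_coeff : D.coeff #s = t ^ #s - 1 := by
    rw [coeff_sub, coeff_card_prod_C_mul_X_sub_C, hB_coeff]
  have hW_degree : D.divX.degree < #s := by
    refine degree_le_natDegree.trans_lt ?_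
    rw [natDegree_divX_eq_natDegree_tsub_one]
    exact_mod_cast (Nat.sub_le_sub_right hD_natDegree 1).trans_lt
      (Nat.sub_one_lt hs.card_pos.ne')
  have hW_eval : ∀ p ∈ s, D.divX.eval (x p) = (t - 1) * ∏ q ∈ s.erase p, (t * x p - x q) := by
    intro p hp
    rw [hD, ← mul_prod_erase s _ hp, ← mul_prod_erase s (fun q => X - C (x q)) hp,
      eval_divX_mul_sub_mul_sub _ _ (by simp [eval_prod])]
    simp [eval_prod]
  calc (t - 1) * ∑ p ∈ s, ∏ q ∈ s.erase p, (t * x p - x q) / (x p - x q)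
      = ∑ p ∈ s, D.divX.eval (x p) / ∏ q ∈ s.erase p, (x p - x q) := by
        rw [mul_sum]
        refine sum_congr rfl fun p hp => ?_
        rw [hW_eval p hp, prod_div_distrib, mul_div_assoc]
    _ = D.divX.coeff (#s - 1) := (Lagrange.coeff_eq_sum hx hW_degree).symm
    _ = t ^ #s - 1 := by rw [coeff_divX, Nat.sub_add_cancel hs.card_pos, hD_coeff]

section OffDiag

variable {α M : Type*} [CommMonoid M] [Fintype α]

theorem Finset.prod_offDiag_eq_prod_filter_lt [LinearOrder α] (f : α → α → M) :
    ∏ p ∈ univ.offDiag, f p.1 p.2 =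
      ∏ p ∈ univ.filter (fun p : α × α => p.1 < p.2), f p.1 p.2 * f p.2 p.1 := by
  rw [← prod_filter_mul_prod_filter_not univ.offDiag (fun p : α × α => p.1 < p.2),
    prod_mul_distrib]
  congr 1
  · congr 1
    ext p
    simpa using ne_of_lt
  · refine prod_equiv (Equiv.prodComm α α) (fun p => ?_) (fun _ _ => rfl)
    simp only [mem_filter, mem_offDiag]
    grind

theorem Finset.prod_offDiag_perm (σ : Equiv.Perm α) (f : α → α → M) :
    ∏ p ∈ univ.offDiag, f (σ p.1) (σ p.2) = ∏ p ∈ univ.offDiag, f p.1 p.2 :=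
  prod_equiv (σ.prodCongr σ) (by simp [σ.injective.ne_iff]) (fun _ _ => rfl)

end OffDiag

section PairProd

variable {α M : Type*} [CommMonoid M]

def pairProd {n : ℕ} (F : α → α → M) (w : Fin n → α) : M :=
  ∏ p ∈ univ.filter (fun p : Fin n × Fin n => p.1 < p.2), F (w p.1) (w p.2)

theorem pairProd_eq_prod_Ioi {n : ℕ} (F : α → α → M) (w : Fin n → α) :
    pairProd F w = ∏ i, ∏ j ∈ Ioi i, F (w i) (w j) := by
  rw [pairProd, prod_filter, Fintype.prod_prod_type]
  refine prod_congr rfl fun i _ => ?_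
  rw [← prod_filter]
  congr 1
  ext j
  simp

theorem pairProd_succ {n : ℕ} (F : α → α → M) (w : Fin (n + 1) → α) :
    pairProd F w = (∏ j : Fin n, F (w 0) (w j.succ)) * pairProd F (Fin.tail w) := by
  simp only [pairProd_eq_prod_Ioi, Fin.prod_univ_succ, Fin.prod_Ioi_zero, Fin.prod_Ioi_succ,
    Fin.tail]

end PairProd

theorem Fin.prod_swap_zero_succ {M : Type*} [CommMonoid M] {n : ℕ} (p : Fin (n + 1))
    (f : Fin (n + 1) → M) :
    ∏ j : Fin n, f (Equiv.swap 0 p j.succ) = ∏ q ∈ univ.erase p, f q := by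
  rw [← Fin.prod_Ioi_zero (fun q => f (Equiv.swap 0 p q))]
  refine prod_equiv (Equiv.swap 0 p) (fun q => ?_) (fun _ _ => rfl)
  simp [Equiv.swap_apply_eq_iff]

theorem sum_perm_pairProd {K : Type*} [Field K] {t : K} (ht : t ≠ 1) {n : ℕ} {y : Fin n → K}
    (hy : Function.Injective y) :
    ∑ σ : Equiv.Perm (Fin n), pairProd (fun a b => (t * a - b) / (a - b)) (y ∘ σ) =
      ∏ k ∈ range n, (1 - t ^ (k + 1)) / (1 - t) := by
  induction n with
  | zero => simp [pairProd]
  | succ n ih =>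
    set F : K → K → K := fun a b => (t * a - b) / (a - b)
    have hstep : ∀ p τ, pairProd F (y ∘ Equiv.Perm.decomposeFin.symm (p, τ)) =
        (∏ q ∈ univ.erase p, F (y p) (y q)) *
          pairProd F ((y ∘ Equiv.swap 0 p ∘ Fin.succ) ∘ τ) := by
      intro p τ
      rw [pairProd_succ]
      congr 1
      · simp only [Function.comp_apply, Equiv.Perm.decomposeFin_symm_apply_zero,
          Equiv.Perm.decomposeFin_symm_apply_succ]
        rw [Equiv.prod_comp τ (fun j => F (y p) (y (Equiv.swap 0 p j.succ))),
          Fin.prod_swap_zero_succ p (fun q => F (y p) (y q))]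
      · congr 1
        funext j
        simp [Fin.tail, Equiv.Perm.decomposeFin_symm_apply_succ]
    have hkey : ∑ p, ∏ q ∈ univ.erase p, F (y p) (y q) = (1 - t ^ (n + 1)) / (1 - t) := by
      have := sub_one_mul_sum_prod_erase_div hy.injOn t (s := univ)
      rw [eq_div_iff (sub_ne_zero.mpr ht.symm)]
      simp only [card_univ, Fintype.card_fin] at this
      linear_combination -this
    rw [← Equiv.Perm.decomposeFin.symm.sum_comp, Fintype.sum_prod_type]
    simp_rw [hstep, ← mul_sum,
      ih (hy.comp ((Equiv.swap 0 _).injective.comp (Fin.succ_injective n)))]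
    rw [← sum_mul, hkey, prod_range_succ, mul_comm]

theorem sub_div_sub_eq_mul_swap_mul {K : Type*} [Field K] {a b t : K} (h : b - t * a ≠ 0) :
    (a - b) / (a - t * b) =
      (a - b) / (a - t * b) * ((b - a) / (b - t * a)) * ((t * a - b) / (a - b)) := by
  rcases eq_or_ne a b with rfl | hab
  · simp
  · rw [mul_assoc, div_mul_div_comm, show (b - a) * (t * a - b) = (b - t * a) * (a - b) by ring,
      div_self (mul_ne_zero h (sub_ne_zero.mpr hab)), mul_one]

theorem symmetrization_eq_general {K : Type*} [Field K] (n : ℕ) (t : K) (ht : t ≠ 1)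
    (z : Fin n → K) (hz : ∀ i j : Fin n, i ≠ j → z i - t * z j ≠ 0) :
    (1 / (n.factorial : K)) *
      ∑ σ : Equiv.Perm (Fin n),
        ∏ p ∈ Finset.univ.filter (fun p : Fin n × Fin n => p.1 < p.2),
          (z (σ p.1) - z (σ p.2)) / (z (σ p.1) - t * z (σ p.2))
    = ((∏ k ∈ Finset.range n, (1 - t ^ (k + 1)) / (1 - t)) / (n.factorial : K)) *
      ∏ p ∈ Finset.univ.filter (fun p : Fin n × Fin n => p.1 < p.2),
        ((z p.1 - z p.2) * (z p.2 - z p.1)) /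
          ((z p.1 - t * z p.2) * (z p.2 - t * z p.1)) := by
  set g : K → K → K := fun a b => (a - b) / (a - t * b)
  set F : K → K → K := fun a b => (t * a - b) / (a - b)
  have hsym : ∏ p ∈ univ.filter (fun p : Fin n × Fin n => p.1 < p.2),
      ((z p.1 - z p.2) * (z p.2 - z p.1)) / ((z p.1 - t * z p.2) * (z p.2 - t * z p.1)) =
        ∏ p ∈ univ.offDiag, g (z p.1) (z p.2) := by
    rw [prod_offDiag_eq_prod_filter_lt (fun i j => g (z i) (z j))]
    exact prod_congr rfl fun p _ => mul_div_mul_comm _ _ _ _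
  have hterm : ∀ σ : Equiv.Perm (Fin n), pairProd g (z ∘ σ) =
      (∏ p ∈ univ.offDiag, g (z p.1) (z p.2)) * pairProd F (z ∘ σ) := by
    intro σ
    rw [← prod_offDiag_perm σ (fun i j => g (z i) (z j)),
      prod_offDiag_eq_prod_filter_lt (fun i j => g (z (σ i)) (z (σ j))),
      pairProd, pairProd, ← prod_mul_distrib]
    refine prod_congr rfl fun p hp => sub_div_sub_eq_mul_swap_mul (hz _ _ ?_)
    exact σ.injective.ne (mem_filter.mp hp).2.ne'
  change 1 / (n.factorial : K) * ∑ σ : Equiv.Perm (Fin n), pairProd g (z ∘ σ) = _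
  rw [hsym, sum_congr rfl fun σ _ => hterm σ, ← mul_sum]
  by_cases hinj : Function.Injective z
  · rw [sum_perm_pairProd ht hinj]
    ring
  · obtain ⟨a, b, hab, hne⟩ := Function.not_injective_iff.mp hinj
    rw [prod_eq_zero (i := (a, b)) (by simpa using hne) (by simp [g, hab])]
    ring

/-- symmetrization of ∏_{i<j} (z_i - z_j)/(z_i - t z_j) equals
  ([n]_t!/n!) ∏_{i<j} (z_i-z_j)(z_j-z_i)/((z_i-tz_j)(z_j-tz_i)),
  where [n]_t! = ∏_{k=1}^n (1-t^k)/(1-t). -/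
theorem symmetrization_eq {K : Type*} [Field K] [CharZero K] (n : ℕ) (t : K) (ht : t ≠ 1)
    (z : Fin n → K) (hz : ∀ i j : Fin n, i ≠ j → z i - t * z j ≠ 0) :
    (1 / (n.factorial : K)) *
      ∑ σ : Equiv.Perm (Fin n),
        ∏ p ∈ Finset.univ.filter (fun p : Fin n × Fin n => p.1 < p.2),
          (z (σ p.1) - z (σ p.2)) / (z (σ p.1) - t * z (σ p.2))
    = ((∏ k ∈ Finset.range n, (1 - t ^ (k + 1)) / (1 - t)) / (n.factorial : K)) *
      ∏ p ∈ Finset.univ.filter (fun p : Fin n × Fin n => p.1 < p.2),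
        ((z p.1 - z p.2) * (z p.2 - z p.1)) /
          ((z p.1 - t * z p.2) * (z p.2 - t * z p.1)) :=
  symmetrization_eq_general n t ht z hz
end

section
/- For any partition $\lambda$, any positive integer $r$, and a parameter $t$ with $|t|<1$ (or working with formal power series in $t$), the identity $h_r(t^{\lambda-\delta}) = (-1)^r e_r(t^{-\lambda'+\delta-1})$ holds, where $h_r$ is the $r$-th complete homogeneous symmetric function evaluated at the specialization $x_i \mapsto t^{\lambda_i-i}$ ($i\ge 1$), $e_r$ is the $r$-th elementary symmetric function evaluated at $x_i \mapsto t^{-\lambda'_i+i-1}$ ($i \ge 1$), and $\lambda'$ is the conjugate (transposed) partition of $\lambda$. -/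
/-!
Write `G(u) = (u; t)_∞ = ∏_{j ≥ 0} (1 - t^j u)` through Euler's expansion, a formal power series
in `u` as long as no `t^k` with `k ≥ 1` equals `1`. The closed forms in the statement are the
coefficients of `G(t^{-N} u)`, standing for the tail `∏_{i > N} (1 - t^{-i} u)⁻¹` of
`∑ h_r(t^{λ-δ}) u^r`, and of `G(t^M u)`, standing for the tail `∏_{j > M} (1 - t^{j-1} u)` of
`∑ (-1)^r e_r(t^{-λ'+δ-1}) u^r`. Since `G(t^a u) = (1 - t^a u) G(t^{a+1} u)`, the theorem reduces to
`∏_{i ≤ N} (1 - t^{λ_i - i} u) ∏_{j ≤ M} (1 - t^{j - 1 - λ'_j} u) = ∏_{-N ≤ k < M} (1 - t^k u)`,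
which holds because the exponents on the left are exactly the integers in `[-N, M)`
(Macdonald, I.(1.7)).
-/

universe u v

open Finset PowerSeries

/-- `μ` is the conjugate of the partition `f`, both listed from index `0`. -/
def IsConjugate (f μ : ℕ → ℕ) : Prop :=
  ∀ i j, j < f i ↔ i < μ j

namespace IsConjugate

variable {f μ : ℕ → ℕ}

theorem symm (hconj : IsConjugate f μ) : IsConjugate μ f :=
  fun j i => (hconj i j).symm

theorem antitone (hconj : IsConjugate f μ) : Antitone f := by
  intro i i' hii'
  by_contra! h
  exact lt_irrefl (f i) ((hconj i (f i)).2 (hii'.trans_lt ((hconj i' (f i)).1 h)))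

theorem le_of_eq_zero (hconj : IsConjugate f μ) {M : ℕ} (hM : μ M = 0) (i : ℕ) : f i ≤ M := by
  by_contra! h
  simpa [hM] using (hconj i M).1 h

theorem strictAnti_sub (hconj : IsConjugate f μ) :
    StrictAnti fun i : ℕ => (f i : ℤ) - (i + 1) := by
  intro i i' hii'
  have := hconj.antitone hii'.le
  dsimp only
  omega

theorem strictMono_sub (hconj : IsConjugate f μ) : StrictMono fun j : ℕ => (j : ℤ) - μ j := by
  intro j j' hjj'
  have := hconj.symm.antitone hjj'.le
  dsimp only
  omega

theorem disjoint_image_sub (hconj : IsConjugate f μ) (s s' : Finset ℕ) :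
    Disjoint (s.image fun i => (f i : ℤ) - (i + 1)) (s'.image fun j : ℕ => (j : ℤ) - μ j) := by
  simp only [disjoint_left, mem_image, not_exists, not_and]
  rintro _ ⟨i, -, rfl⟩ j - h
  by_cases hji : j < f i
  · have := (hconj i j).1 hji
    omega
  · have := (hconj i j).not.1 hji
    omega

theorem image_union_image_eq_Ico (hconj : IsConjugate f μ) {N M : ℕ} (hN : f N = 0)
    (hM : μ M = 0) :
    (range N).image (fun i => (f i : ℤ) - (i + 1)) ∪ (range M).image (fun j : ℕ => (j : ℤ) - μ j)
      = Ico (-(N : ℤ)) M := by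
  refine eq_of_subset_of_card_le ?_ ?_
  · intro k hk
    simp only [mem_union, mem_image, mem_range] at hk
    rw [mem_Ico]
    rcases hk with ⟨i, hi, rfl⟩ | ⟨j, hj, rfl⟩
    · have := hconj.le_of_eq_zero hM i
      omega
    · have := hconj.symm.le_of_eq_zero hN j
      omega
  · rw [card_union_of_disjoint (hconj.disjoint_image_sub _ _),
      card_image_of_injective _ hconj.strictAnti_sub.injective,
      card_image_of_injective _ hconj.strictMono_sub.injective, Int.card_Ico, card_range,
      card_range]
    omega

end IsConjugate

section GeneratingFunctions

variable {ι : Type u} {R : Type v} [CommRing R]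

section Complete

variable [DecidableEq ι]

noncomputable def completeSeries (x : ι → R) (s : Finset ι) : R⟦X⟧ :=
  mk fun k => ∑ m ∈ s.sym k, (m.1.map x).prod

theorem Finset.sym_succ_insert {a : ι} {s : Finset ι} (ha : a ∉ s) (k : ℕ) :
    (insert a s).sym (k + 1) = ((insert a s).sym k).image (Sym.cons a) ∪ s.sym (k + 1) := by
  ext m
  simp only [mem_union, mem_image, mem_sym_iff]
  constructor
  · intro h
    by_cases hm : a ∈ m
    · refine Or.inl ⟨m.erase a hm, fun b hb => h b ?_, Sym.cons_erase hm⟩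
      have hb' : b ∈ (m : Multiset ι).erase a := by rwa [← Sym.coe_erase hm]
      exact Multiset.mem_of_mem_erase hb'
    · exact Or.inr fun b hb => (mem_insert.1 (h b hb)).resolve_left (by rintro rfl; exact hm hb)
  · rintro (⟨m', hm', rfl⟩ | h) b hb
    · rcases Sym.mem_cons.1 hb with rfl | hb'
      exacts [mem_insert_self _ _, hm' b hb']
    · exact mem_insert_of_mem (h b hb)

theorem completeSeries_insert_mul {a : ι} {s : Finset ι} (ha : a ∉ s) (x : ι → R) :
    completeSeries x (insert a s) * (1 - C (x a) * X) = completeSeries x s := by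
  have hdisj (k : ℕ) : Disjoint (((insert a s).sym k).image (Sym.cons a)) (s.sym (k + 1)) := by
    rw [disjoint_left]
    rintro m hm hm'
    obtain ⟨m', _, rfl⟩ := mem_image.1 hm
    exact ha (mem_sym_iff.1 hm' a (Sym.mem_cons_self a m'))
  ext (_ | k)
  · simp [completeSeries]
  · rw [mul_sub, mul_one, ← mul_assoc, mul_comm _ (C _), mul_assoc, map_sub, coeff_C_mul,
      coeff_succ_mul_X]
    simp only [completeSeries, coeff_mk]
    rw [sym_succ_insert ha, sum_union (hdisj k),
      sum_image fun u _ v _ h => (Sym.cons_inj_right a u v).1 h, mul_sum]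
    simp [Sym.coe_cons]

theorem completeSeries_mul_prod_one_sub (x : ι → R) (s : Finset ι) :
    completeSeries x s * ∏ i ∈ s, (1 - C (x i) * X) = 1 := by
  induction s using Finset.induction_on with
  | empty =>
    ext (_ | k)
    · simp [completeSeries]
      rfl
    · simp [completeSeries]
  | insert a s ha ih => rw [prod_insert ha, ← mul_assoc, completeSeries_insert_mul ha, ih]

end Complete

theorem coeff_prod_one_sub_C_mul_X (y : ι → R) (s : Finset ι) (k : ℕ) :
    coeff k (∏ j ∈ s, (1 - C (y j) * X)) = (-1) ^ k * ∑ T ∈ powersetCard k s, ∏ j ∈ T, y j := by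
  have hterm (T : Finset ι) : ∏ j ∈ T, -(C (y j) * X) = C ((-1) ^ #T * ∏ j ∈ T, y j) * X ^ #T := by
    rw [prod_neg, prod_mul_distrib, ← map_prod, prod_const, map_mul, map_pow, map_neg, map_one,
      mul_assoc]
  simp_rw [sub_eq_add_neg, prod_one_add, hterm, map_sum, coeff_C_mul_X_pow, powersetCard_eq_filter,
    sum_filter, mul_sum]
  refine sum_congr rfl fun T _ => ?_
  split_ifs <;> simp_all [eq_comm]

section QPochhammer

variable {K : Type u} [Field K] {t : K}

/-- Euler's expansion of the formal product `(X; t)_∞ = ∏_{j ≥ 0} (1 - t ^ j X)`. -/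
noncomputable def infQPochhammer (t : K) : K⟦X⟧ :=
  mk fun m => (-1) ^ m * t ^ m.choose 2 / ∏ l ∈ range m, (1 - t ^ (l + 1))

theorem one_sub_pow_succ_ne_zero (ht : ∀ k : ℕ, 1 ≤ k → t ^ k ≠ 1) (l : ℕ) :
    1 - t ^ (l + 1) ≠ 0 :=
  sub_ne_zero.2 (ht (l + 1) l.succ_pos).symm

theorem infQPochhammer_eq_one_sub_X_mul_rescale (ht : ∀ k : ℕ, 1 ≤ k → t ^ k ≠ 1) :
    infQPochhammer t = (1 - X) * rescale t (infQPochhammer t) := by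
  ext (_ | m) <;> rw [sub_mul, one_mul, map_sub]
  · simp [infQPochhammer]
  · have hP : ∏ l ∈ range m, (1 - t ^ (l + 1)) ≠ 0 :=
      prod_ne_zero_iff.2 fun l _ => one_sub_pow_succ_ne_zero ht l
    have hm := one_sub_pow_succ_ne_zero ht m
    rw [coeff_succ_X_mul]
    simp only [infQPochhammer, coeff_rescale, coeff_mk, prod_range_succ, Nat.choose_succ_succ,
      Nat.choose_one_right]
    field_simp
    ring

theorem rescale_infQPochhammer (ht : ∀ k : ℕ, 1 ≤ k → t ^ k ≠ 1) (c : K) :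
    rescale c (infQPochhammer t) = (1 - C c * X) * rescale (t * c) (infQPochhammer t) := by
  conv_lhs => rw [infQPochhammer_eq_one_sub_X_mul_rescale ht]
  rw [map_mul, map_sub, map_one, rescale_X, rescale_rescale]

theorem rescale_zpow_infQPochhammer (ht0 : t ≠ 0) (ht : ∀ k : ℕ, 1 ≤ k → t ^ k ≠ 1) {a b : ℤ}
    (hab : a ≤ b) :
    rescale (t ^ a) (infQPochhammer t)
      = (∏ k ∈ Ico a b, (1 - C (t ^ k) * X)) * rescale (t ^ b) (infQPochhammer t) := by
  induction b, hab using Int.leInduction with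
  | base => simp
  | succ b hab ih =>
    rw [ih, ← insert_Ico_right_eq_Ico_add_one hab, prod_insert right_notMem_Ico, mul_comm (_ - _),
      mul_assoc, rescale_infQPochhammer ht, zpow_add_one₀ ht0, mul_comm t]

theorem coeff_rescale_pow_infQPochhammer (M m : ℕ) :
    coeff m (rescale (t ^ M) (infQPochhammer t))
      = (-1) ^ m * (t ^ (m * M + m * (m - 1) / 2) / ∏ l ∈ range m, (1 - t ^ (l + 1))) := by
  rw [coeff_rescale, infQPochhammer, coeff_mk, Nat.choose_two_right, pow_add, ← pow_mul]
  ring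

/-- Euler's other expansion, `(X; t)_∞ = ∏_{i ≥ 1} (1 - t⁻ⁱ X)⁻¹`. -/
theorem coeff_infQPochhammer_eq_inv_pow_div (ht0 : t ≠ 0) (ht : ∀ k : ℕ, 1 ≤ k → t ^ k ≠ 1)
    (m : ℕ) : coeff m (infQPochhammer t) = t⁻¹ ^ m / ∏ l ∈ range m, (1 - t⁻¹ ^ (l + 1)) := by
  rw [infQPochhammer, coeff_mk]
  induction m with
  | zero => simp
  | succ m ih =>
    have hm := one_sub_pow_succ_ne_zero ht m
    have hm' : 1 - t⁻¹ ^ (m + 1) ≠ 0 := by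
      rw [inv_pow]
      exact sub_ne_zero.2 fun h => hm (by rw [← inv_eq_one.1 h.symm, sub_self])
    have hP : ∏ l ∈ range m, (1 - t ^ (l + 1)) ≠ 0 :=
      prod_ne_zero_iff.2 fun l _ => one_sub_pow_succ_ne_zero ht l
    have hsplit : t⁻¹ ^ (m + 1) / ((∏ l ∈ range m, (1 - t⁻¹ ^ (l + 1))) * (1 - t⁻¹ ^ (m + 1)))
        = t⁻¹ ^ m / (∏ l ∈ range m, (1 - t⁻¹ ^ (l + 1))) * (t⁻¹ / (1 - t⁻¹ ^ (m + 1))) := by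
      rw [← mul_div_mul_comm, ← pow_succ]
    have hfactor : t⁻¹ / (1 - t⁻¹ ^ (m + 1)) = -t ^ m / (1 - t ^ (m + 1)) := by
      rw [div_eq_div_iff hm' hm, inv_pow]
      field_simp
      ring
    rw [prod_range_succ, prod_range_succ, hsplit, ← ih, hfactor, Nat.choose_succ_succ,
      Nat.choose_one_right]
    field_simp
    ring

theorem coeff_rescale_zpow_neg_infQPochhammer (ht0 : t ≠ 0) (ht : ∀ k : ℕ, 1 ≤ k → t ^ k ≠ 1)
    (N m : ℕ) :
    coeff m (rescale (t ^ (-(N : ℤ))) (infQPochhammer t))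
      = t ^ (-((m * (N + 1) : ℕ) : ℤ)) / ∏ l ∈ range m, (1 - t ^ (-((l : ℤ) + 1))) := by
  have hzpow (k : ℕ) : t ^ (-(k : ℤ)) = t⁻¹ ^ k := by rw [← inv_zpow', zpow_natCast]
  simp only [coeff_rescale, coeff_infQPochhammer_eq_inv_pow_div ht0 ht, hzpow, ← Nat.cast_succ]
  ring

theorem completeSeries_mul_rescale_eq_prod_mul_rescale (ht0 : t ≠ 0)
    (ht : ∀ k : ℕ, 1 ≤ k → t ^ k ≠ 1) {f μ : ℕ → ℕ} (hconj : IsConjugate f μ) {N M : ℕ}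
    (hN : f N = 0) (hM : μ M = 0) :
    completeSeries (fun i => t ^ ((f i : ℤ) - (i + 1))) (range N)
        * rescale (t ^ (-(N : ℤ))) (infQPochhammer t)
      = (∏ j ∈ range M, (1 - C (t ^ ((j : ℤ) - μ j)) * X))
        * rescale (t ^ M) (infQPochhammer t) := by
  rw [rescale_zpow_infQPochhammer ht0 ht (by omega : -(N : ℤ) ≤ M), zpow_natCast,
    ← hconj.image_union_image_eq_Ico hN hM, prod_union (hconj.disjoint_image_sub _ _),
    prod_image hconj.strictAnti_sub.injective.injOn,
    prod_image hconj.strictMono_sub.injective.injOn, ← mul_assoc, ← mul_assoc,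
    completeSeries_mul_prod_one_sub, one_mul]

end QPochhammer

theorem h_eq_neg_pow_e_general {K : Type*} [Field K] (t : K) (ht0 : t ≠ 0)
    (ht : ∀ k : ℕ, 1 ≤ k → t ^ k ≠ 1)
    (f μ : ℕ → ℕ) (hconj : ∀ i j : ℕ, j < f i ↔ i < μ j)
    (N M : ℕ) (hN : ∀ i, N ≤ i → f i = 0) (hM : ∀ j, M ≤ j → μ j = 0)
    (r : ℕ) :
    (∑ k ∈ Finset.range (r + 1),
        (∑ m ∈ (Finset.range N).sym k,
            ((m : Sym ℕ k).1.map (fun i => t ^ ((f i : ℤ) - (i + 1)))).prod) *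
          (t ^ (-(((r - k) * (N + 1) : ℕ) : ℤ)) /
            ∏ l ∈ Finset.range (r - k), (1 - t ^ (-((l : ℤ) + 1)))))
    = (-1) ^ r *
      ∑ k ∈ Finset.range (r + 1),
        (∑ T ∈ Finset.powersetCard k (Finset.range M),
            ∏ j ∈ T, t ^ ((j : ℤ) - (μ j : ℤ))) *
          (t ^ ((r - k) * M + (r - k) * (r - k - 1) / 2) /
            ∏ l ∈ Finset.range (r - k), (1 - t ^ (l + 1))) := by
  have key := congrArg (coeff r)
    (completeSeries_mul_rescale_eq_prod_mul_rescale ht0 ht hconj (hN N le_rfl) (hM M le_rfl))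
  rw [coeff_mul, coeff_mul, Nat.sum_antidiagonal_eq_sum_range_succ_mk,
    Nat.sum_antidiagonal_eq_sum_range_succ_mk] at key
  simp only [completeSeries, coeff_mk, coeff_rescale_zpow_neg_infQPochhammer ht0 ht,
    coeff_prod_one_sub_C_mul_X, coeff_rescale_pow_infQPochhammer] at key
  rw [key, mul_sum]
  refine sum_congr rfl fun k hk => ?_
  have hsign : (-1 : K) ^ r = (-1) ^ k * (-1) ^ (r - k) := by
    rw [← pow_add, Nat.add_sub_cancel' (Nat.lt_succ_iff.1 (mem_range.1 hk))]
  rw [hsign]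
  ring

/-- `h_r(t^{λ-δ}) = (-1)^r e_r(t^{-λ'+δ-1})`.

Here the partition `λ` is encoded (0-indexed) by an antitone, eventually-zero function
`f : ℕ → ℕ` (`f i = λ_{i+1}`), and its conjugate `λ'` by `μ` (`μ j = λ'_{j+1}`),
characterized by `j < f i ↔ i < μ j`.

The specializations `x_i ↦ t^{λ_i - i}` (resp. `x_i ↦ t^{-λ'_i + i - 1}`) have
infinite geometric tails; the (analytically convergent) values `h_r(t^{λ-δ})` and
`e_r(t^{-λ'+δ-1})` are rational functions of `t`, expressed exactly by splitting off a
cutoff `N ≥ ℓ(λ)` (resp. `M ≥ λ_1`) and summing the geometric tails in closed form: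
`h_j` of the tail `t^{-(N+1)}, t^{-(N+2)}, …` is `t^{-j(N+1)}/∏_{l=1}^j(1-t^{-l})`, and
`e_j` of the tail `t^{M}, t^{M+1}, …` is `t^{jM + j(j-1)/2}/∏_{l=1}^j(1-t^{l})`. -/
theorem h_eq_neg_pow_e {K : Type*} [Field K] (t : K) (ht0 : t ≠ 0)
    (ht : ∀ k : ℕ, 1 ≤ k → t ^ k ≠ 1)
    (f μ : ℕ → ℕ) (hf : Antitone f) (hconj : ∀ i j : ℕ, j < f i ↔ i < μ j)
    (N M : ℕ) (hN : ∀ i, N ≤ i → f i = 0) (hM : ∀ j, M ≤ j → μ j = 0)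
    (r : ℕ) (hr : 1 ≤ r) :
    (∑ k ∈ Finset.range (r + 1),
        (∑ m ∈ (Finset.range N).sym k,
            ((m : Sym ℕ k).1.map (fun i => t ^ ((f i : ℤ) - (i + 1)))).prod) *
          (t ^ (-(((r - k) * (N + 1) : ℕ) : ℤ)) /
            ∏ l ∈ Finset.range (r - k), (1 - t ^ (-((l : ℤ) + 1)))))
    = (-1) ^ r *
      ∑ k ∈ Finset.range (r + 1),
        (∑ T ∈ Finset.powersetCard k (Finset.range M),
            ∏ j ∈ T, t ^ ((j : ℤ) - (μ j : ℤ))) *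
          (t ^ ((r - k) * M + (r - k) * (r - k - 1) / 2) /
            ∏ l ∈ Finset.range (r - k), (1 - t ^ (l + 1))) :=
  h_eq_neg_pow_e_general t ht0 ht f μ hconj N M hN hM r
end GeneratingFunctions
end
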